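/- arXiv:1304.2520 — 2 statements merged into one kernel-verified Lean document; each statement's English description precedes it below -/
import Mathlib

section
/- Let A be a commutative ring and M an A-module. For the contravariant functor Cart(M) on flat finitely presented A-algebras defined by Cart(M)(B) = B ⊗_A M, and for every faithfully flat A-algebra homomorphism A → B, the diagram M → B ⊗_A M ⇉ (B ⊗_A B) ⊗_A M (with maps x ↦ 1⊗x, b⊗y ↦ b⊗1⊗y, b⊗y ↦ 1⊗b⊗y) is an equalizer of A-modules. -/
open TensorProduct

universe u

section Aux

variable (A B M : Type u) [CommRing A] [CommRing B] [Algebra A B]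
    [AddCommGroup M] [Module A M]

/-- the unit map `x ↦ 1 ⊗ x` -/
noncomputable abbrev descF : M →ₗ[A] B ⊗[A] M := TensorProduct.mk A B M 1

/-- first of the two parallel maps: `b ⊗ m ↦ (b ⊗ 1) ⊗ m` -/
noncomputable abbrev descD1 : B ⊗[A] M →ₗ[A] (B ⊗[A] B) ⊗[A] M :=
  TensorProduct.map ((TensorProduct.mk A B B).flip 1) (LinearMap.id (M := M))

/-- second of the two parallel maps: `b ⊗ m ↦ (1 ⊗ b) ⊗ m` -/
noncomputable abbrev descD2 : B ⊗[A] M →ₗ[A] (B ⊗[A] B) ⊗[A] M :=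
  TensorProduct.map (TensorProduct.mk A B B 1) (LinearMap.id (M := M))

/-- retraction `b ⊗ (b' ⊗ m) ↦ b b' ⊗ m` -/
noncomputable abbrev descS : B ⊗[A] (B ⊗[A] M) →ₗ[A] B ⊗[A] M :=
  (LinearMap.rTensor M (LinearMap.mul' A B)).comp
    (TensorProduct.assoc A B B M).symm.toLinearMap

/-- homotopy `b ⊗ ((b₁ ⊗ b₂) ⊗ m) ↦ (b b₁) ⊗ (b₂ ⊗ m)` -/
noncomputable abbrev descH : B ⊗[A] ((B ⊗[A] B) ⊗[A] M) →ₗ[A] B ⊗[A] (B ⊗[A] M) :=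
  (LinearMap.rTensor (B ⊗[A] M) (LinearMap.mul' A B)).comp <|
    ((TensorProduct.assoc A B B (B ⊗[A] M)).symm.toLinearMap).comp <|
      LinearMap.lTensor B (TensorProduct.assoc A B B M).toLinearMap

lemma descS_comp : (descS A B M).comp (LinearMap.lTensor B (descF A B M)) = LinearMap.id := by
  ext b m
  simp

lemma descH_comp1 : (descH A B M).comp (LinearMap.lTensor B (descD1 A B M))
    = (LinearMap.lTensor B (descF A B M)).comp (descS A B M) := by
  ext b b' m
  simp

lemma descH_comp2 : (descH A B M).comp (LinearMap.lTensor B (descD2 A B M))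
    = LinearMap.id := by
  ext b b' m
  simp

lemma descD12_comp : (descD1 A B M).comp (descF A B M) = (descD2 A B M).comp (descF A B M) := by
  ext m
  simp

end Aux

/-- Let `A` be a commutative ring, `B` a faithfully flat
commutative `A`-algebra and `M` an `A`-module.  Then the diagram
`M → B ⊗[A] M ⇉ (B ⊗[A] B) ⊗[A] M` (with maps `x ↦ 1 ⊗ x`,
`b ⊗ y ↦ b ⊗ 1 ⊗ y` and `b ⊗ y ↦ 1 ⊗ b ⊗ y`) is an equalizer of `A`-modules:
the first map is injective, it equalizes the two parallel maps, and every
element equalized by the parallel maps lies in its image. -/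
theorem faithfully_flat_descent_equalizer
    (A B M : Type u) [CommRing A] [CommRing B] [Algebra A B]
    [Module.FaithfullyFlat A B] [AddCommGroup M] [Module A M] :
    Function.Injective (TensorProduct.mk A B M 1) ∧
    (TensorProduct.map ((TensorProduct.mk A B B).flip 1) (LinearMap.id (M := M))).comp
        (TensorProduct.mk A B M 1)
      = (TensorProduct.map (TensorProduct.mk A B B 1) (LinearMap.id (M := M))).comp
          (TensorProduct.mk A B M 1) ∧
    ∀ y : B ⊗[A] M,
      TensorProduct.map ((TensorProduct.mk A B B).flip 1) (LinearMap.id (M := M)) y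
        = TensorProduct.map (TensorProduct.mk A B B 1) (LinearMap.id (M := M)) y →
      ∃ x : M, y = 1 ⊗ₜ[A] x := by
  set descD : B ⊗[A] M →ₗ[A] (B ⊗[A] B) ⊗[A] M := descD1 A B M - descD2 A B M with hdescD
  have hInjT : Function.Injective (LinearMap.lTensor B (descF A B M)) := by
    intro x y h
    have h2 : (descS A B M).comp (LinearMap.lTensor B (descF A B M)) x
        = (descS A B M).comp (LinearMap.lTensor B (descF A B M)) y := by
      simp only [LinearMap.comp_apply, h]
    rwa [descS_comp, LinearMap.id_apply, LinearMap.id_apply] at h2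
  -- descD kills the image of descF
  have hDF : descD.comp (descF A B M) = 0 := by
    apply LinearMap.ext
    intro m
    show descD1 A B M (descF A B M m) - descD2 A B M (descF A B M m) = 0
    exact sub_eq_zero_of_eq (LinearMap.congr_fun (descD12_comp A B M) m)
  -- the homotopy identity, pointwise
  have hH : ∀ z : B ⊗[A] (B ⊗[A] M),
      descH A B M ((LinearMap.lTensor B descD) z)
        = (LinearMap.lTensor B (descF A B M)) (descS A B M z) - z := by
    intro z
    have e0 : (LinearMap.lTensor B descD) z
        = (LinearMap.lTensor B (descD1 A B M)) z - (LinearMap.lTensor B (descD2 A B M)) z :=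
      LinearMap.congr_fun (LinearMap.lTensor_sub (M := B) (descD1 A B M) (descD2 A B M)) z
    have c1 : descH A B M ((LinearMap.lTensor B (descD1 A B M)) z)
        = (LinearMap.lTensor B (descF A B M)) (descS A B M z) := by
      simpa using LinearMap.congr_fun (descH_comp1 A B M) z
    have c2 : descH A B M ((LinearMap.lTensor B (descD2 A B M)) z) = z := by
      simpa using LinearMap.congr_fun (descH_comp2 A B M) z
    rw [e0, map_sub, c1, c2]
  refine ⟨?_, ?_, ?_⟩
  · -- injectivity
    have ex : Function.Exact (0 : A →ₗ[A] M) (descF A B M) := by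
      apply Module.FaithfullyFlat.lTensor_reflects_exact A B
      rw [LinearMap.lTensor_zero]
      intro y
      constructor
      · intro h
        have hy : y = 0 := hInjT (by simpa using h)
        exact ⟨0, by simp [hy]⟩
      · rintro ⟨x, rfl⟩
        simp
    intro x y h
    have h0 : descF A B M (x - y) = 0 := by
      rw [map_sub, show descF A B M x = descF A B M y from h, sub_self]
    obtain ⟨a, ha⟩ := (ex (x - y)).mp h0
    have hz : x - y = 0 := by simpa using ha.symm
    exact sub_eq_zero.mp hz
  · -- equalizes
    exact descD12_comp A B M
  · -- exactness at the middle
    have ex : Function.Exact (descF A B M) descD := by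
      apply Module.FaithfullyFlat.lTensor_reflects_exact A B
      intro z
      constructor
      · intro h
        refine ⟨descS A B M z, ?_⟩
        have key := hH z
        rw [h, map_zero] at key
        exact (eq_of_sub_eq_zero key.symm).symm ▸ rfl
      · rintro ⟨w, rfl⟩
        rw [← LinearMap.comp_apply, ← LinearMap.lTensor_comp, hDF, LinearMap.lTensor_zero]
        rfl
    intro y h
    have hd : descD y = 0 := by
      show descD1 A B M y - descD2 A B M y = 0
      exact sub_eq_zero_of_eq h
    obtain ⟨x, hx⟩ := (ex y).mp hd
    exact ⟨x, hx.symm⟩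
end

section
/- Let F : C → D be a functor between small categories such that for every object U of D, the comma-type category I_U^F (objects: pairs (V, g) with V in C and g : U → F(V)) has finite products. Then the left Kan extension functor along F (the presheaf inverse image f^p, defined objectwise as the colimit over I_U^F) commutes with finite products of presheaves of sets. -/
open CategoryTheory CategoryTheory.Limits

universe u

/-!
Since `I_U^F` has finite products, its opposite has finite coproducts and is therefore sifted:
it is nonempty (it has an initial object) and binary coproducts make the diagonal final.
Colimits of sets over a sifted category commute with finite products, and restriction along
`(I_U^F)ᵒᵖ ⥤ Cᵒᵖ` preserves all limits, so `G ↦ f^p(G)(U)` preserves finite products.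
-/

theorem CategoryTheory.IsSifted.of_hasFiniteCoproducts (K : Type*) [Category K]
    [HasFiniteCoproducts K] : IsSifted K :=
  have : Nonempty K := ⟨⊥_ K⟩
  inferInstance

/-- Let `F : C → D` be a functor between small categories such
that for every object `U` of `D` the comma-type category `I_U^F` (objects:
pairs `(V, g)` with `V ∈ C` and `g : U → F(V)`, i.e. `StructuredArrow U F`) has
finite products.  Then the presheaf inverse image (left Kan extension along
`F`), computed objectwise as the colimit over `I_U^F`, commutes with finite
products of presheaves of sets: the canonical map
`f^p(G₁ × ⋯ × Gᵣ)(U) → (f^p G₁ × ⋯ × f^p Gᵣ)(U)` is an isomorphism. -/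
theorem presheaf_inverse_image_commutes_with_finite_products
    {C D : Type u} [SmallCategory C] [SmallCategory D] (F : C ⥤ D)
    (hprod : ∀ U : D, HasFiniteProducts (StructuredArrow U F))
    (r : ℕ) (G : Fin r → (Cᵒᵖ ⥤ Type u)) (U : D) :
    IsIso (Pi.lift (fun i =>
        colim.map (Functor.whiskerLeft (StructuredArrow.proj U F).op (Pi.π G i))) :
      colim.obj ((StructuredArrow.proj U F).op ⋙ ∏ᶜ G)
        ⟶ ∏ᶜ fun i => colim.obj ((StructuredArrow.proj U F).op ⋙ G i)) := by
  have := hprod U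
  have := IsSifted.of_hasFiniteCoproducts (StructuredArrow U F)ᵒᵖ
  exact inferInstanceAs (IsIso (piComparison
    ((Functor.whiskeringLeft _ _ (Type u)).obj (StructuredArrow.proj U F).op ⋙ colim) G))
end
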